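/- Let p ≥ 1 and let f be a consensus function on the n-cube Q_n. Then f equals the ℓ_p-function if and only if f satisfies the Translation property (T) and for every profile π = (x₁,…,x_k): the all-zeros vertex 𝟎 belongs to f(π) if and only if Char_p(π) ≤ Char_p(π ⊕ a) for every vertex a in Q_n. -/

import Mathlib

/-- A vertex of the n-cube `Q_n`: an element of `{0,1}^n`. -/
abbrev Vertex (n : ℕ) := Fin n → Bool

/-- Coordinatewise addition modulo 2 (`u ⊕ v`). -/
def vxor {n : ℕ} (u v : Vertex n) : Vertex n := fun i => xor (u i) (v i)

/-- A profile: a nonempty finite sequence of vertices of `Q_n`. -/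
def Profile (n : ℕ) := { l : List (Vertex n) // l ≠ [] }

/-- Translation of a profile: `π ⊕ v = (x₁ ⊕ v, …, x_k ⊕ v)`. -/
def pxor {n : ℕ} (π : Profile n) (v : Vertex n) : Profile n :=
  ⟨π.1.map (fun x => vxor x v), by simpa using π.2⟩

/-- The Translation property (T) for a consensus function. -/
def Translation {n : ℕ} (f : Profile n → Set (Vertex n)) : Prop :=
  ∀ (π : Profile n) (u v : Vertex n), u ∈ f π → vxor u v ∈ f (pxor π v)

/-- Hamming distance on the n-cube. -/
def cubeDist {n : ℕ} (u v : Vertex n) : ℕ := hammingDist u v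

/-- The all-zeros vertex `𝟎`. -/
def zeroV (n : ℕ) : Vertex n := fun _ => false

/-- `‖u‖ = d(𝟎,u)`, the number of ones in `u`. -/
def vnorm {n : ℕ} (u : Vertex n) : ℕ := cubeDist (zeroV n) u

/-- `‖π‖ = max{‖x₁‖,…,‖x_k‖}`. -/
def pnorm {n : ℕ} (π : Profile n) : ℕ := (π.1.map vnorm).foldr max 0

/-- Eccentricity `e(x, π) = max_j d(x, x_j)`. -/
def ecc {n : ℕ} (π : Profile n) (x : Vertex n) : ℕ :=
  (π.1.map (fun y => cubeDist x y)).foldr max 0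

/-- The center function. -/
def Cen {n : ℕ} (π : Profile n) : Set (Vertex n) :=
  {x | ∀ y : Vertex n, ecc π x ≤ ecc π y}

/-- Status `S_π(x) = Σ_j d(x, x_j)`. -/
def status {n : ℕ} (π : Profile n) (x : Vertex n) : ℕ :=
  (π.1.map (fun y => cubeDist x y)).sum

/-- The median function. -/
def Med {n : ℕ} (π : Profile n) : Set (Vertex n) :=
  {x | ∀ y : Vertex n, status π x ≤ status π y}

/-- The anti-median function. -/
def AM {n : ℕ} (π : Profile n) : Set (Vertex n) :=
  {x | ∀ y : Vertex n, status π y ≤ status π x}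

/-- `Σ_{j=1}^k xᵢ^j`: the number of profile entries with a 1 in coordinate `i`. -/
def cnt {n : ℕ} (π : Profile n) (i : Fin n) : ℕ :=
  (π.1.map (fun x => if x i then 1 else 0)).sum

/-- The majority vertex `Maj(π)`: `wᵢ = 1` iff `Σ_j xᵢ^j > k/2`. -/
def Maj {n : ℕ} (π : Profile n) : Vertex n :=
  fun i => decide (π.1.length < 2 * cnt π i)

/-- The minority vertex `Min(π)`: `mᵢ = 1` iff `Σ_j xᵢ^j < k/2`. -/
def MinV {n : ℕ} (π : Profile n) : Vertex n :=
  fun i => decide (2 * cnt π i < π.1.length)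

/-- The Condorcet score `Cs(π)`. -/
def Cs {n : ℕ} (π : Profile n) : ℕ :=
  (Finset.univ.filter (fun i : Fin n => 2 * cnt π i = π.1.length)).card

/-- The Majority property (Maj). -/
def MajProp {n : ℕ} (f : Profile n → Set (Vertex n)) : Prop :=
  ∀ π : Profile n, Maj π ∈ f π

/-- The Minority property (Min). -/
def MinProp {n : ℕ} (f : Profile n → Set (Vertex n)) : Prop :=
  ∀ π : Profile n, MinV π ∈ f π

/-- The Restricted Range property (RR): `|f(π)| ≤ 2^{Cs(π)}`. -/
def RestrictedRange {n : ℕ} (f : Profile n → Set (Vertex n)) : Prop :=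
  ∀ π : Profile n, (f π).ncard ≤ 2 ^ Cs π

/-- The `ℓ_p` status `ℓ_pS_π(x) = Σ_j d(x,x_j)^p`. -/
noncomputable def lpStatus {n : ℕ} (p : ℝ) (π : Profile n) (x : Vertex n) : ℝ :=
  (π.1.map (fun y => (cubeDist x y : ℝ) ^ p)).sum

/-- The `ℓ_p`-function. -/
noncomputable def lpFun {n : ℕ} (p : ℝ) (π : Profile n) : Set (Vertex n) :=
  {x | ∀ y : Vertex n, lpStatus p π x ≤ lpStatus p π y}

/-- The `p`-Characteristic `Char_p(π) = Σ_j ‖x_j‖^p`. -/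
noncomputable def Charp {n : ℕ} (p : ℝ) (π : Profile n) : ℝ :=
  (π.1.map (fun x => (vnorm x : ℝ) ^ p)).sum

/-- Concatenation of profiles `π₁π₂`. -/
def pconcat {n : ℕ} (π₁ π₂ : Profile n) : Profile n :=
  ⟨π₁.1 ++ π₂.1, by simp [π₁.2]⟩

/-- The profile of length one consisting of the single vertex `x`. -/
def singleP {n : ℕ} (x : Vertex n) : Profile n := ⟨[x], by simp⟩

/-- The Consistency property (C). -/
def Consistency {n : ℕ} (f : Profile n → Set (Vertex n)) : Prop :=
  ∀ π₁ π₂ : Profile n, (f π₁ ∩ f π₂).Nonempty → f (pconcat π₁ π₂) = f π₁ ∩ f π₂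


/-!
Translation by `v` is an isometry of the cube and an involution, so both `ℓ_p` and any `f` with
(T) are determined by which profiles have `𝟎` as a consensus vertex. For `ℓ_p` these are exactly
the profiles satisfying the stated condition, because `Char_p(π ⊕ a) = ℓ_pS_π(a)`.
-/

section

variable {n : ℕ}

@[simp]
lemma vxor_self (u : Vertex n) : vxor u u = zeroV n := by
  funext i; simp [vxor, zeroV]

@[simp]
lemma vxor_vxor_cancel_right (u v : Vertex n) : vxor (vxor u v) v = u := by
  funext i; simp [vxor]

lemma cubeDist_vxor_vxor (u v w : Vertex n) : cubeDist (vxor u w) (vxor v w) = cubeDist u v := by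
  simp only [cubeDist, hammingDist, vxor, ne_eq, Bool.xor_left_inj]

@[simp]
lemma pxor_pxor_cancel (π : Profile n) (v : Vertex n) : pxor (pxor π v) v = π := by
  apply Subtype.ext
  simp [pxor, Function.comp_def]

lemma lpStatus_pxor_vxor (p : ℝ) (π : Profile n) (x v : Vertex n) :
    lpStatus p (pxor π v) (vxor x v) = lpStatus p π x := by
  simp only [lpStatus, pxor, List.map_map, Function.comp_def, cubeDist_vxor_vxor]

lemma charp_eq_lpStatus_zero (p : ℝ) (π : Profile n) : Charp p π = lpStatus p π (zeroV n) := rfl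

lemma charp_pxor (p : ℝ) (π : Profile n) (a : Vertex n) : Charp p (pxor π a) = lpStatus p π a := by
  rw [charp_eq_lpStatus_zero, ← vxor_self a, lpStatus_pxor_vxor]

lemma Translation.mem_pxor_iff {f : Profile n → Set (Vertex n)} (hf : Translation f)
    (π : Profile n) (u v : Vertex n) : vxor u v ∈ f (pxor π v) ↔ u ∈ f π :=
  ⟨fun h => by simpa using hf _ _ v h, hf π u v⟩

lemma Translation.ext {f g : Profile n → Set (Vertex n)} (hf : Translation f)
    (hg : Translation g) (h : ∀ π, zeroV n ∈ f π ↔ zeroV n ∈ g π) : f = g := by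
  funext π
  ext u
  rw [← hf.mem_pxor_iff π u u, ← hg.mem_pxor_iff π u u, vxor_self]
  exact h _

lemma translation_lpFun (p : ℝ) : Translation (lpFun (n := n) p) := by
  intro π u v hu y
  rw [lpStatus_pxor_vxor, ← vxor_vxor_cancel_right y v, lpStatus_pxor_vxor]
  exact hu _

lemma zero_mem_lpFun_iff (p : ℝ) (π : Profile n) :
    zeroV n ∈ lpFun p π ↔ ∀ a : Vertex n, Charp p π ≤ Charp p (pxor π a) := by
  simp only [charp_pxor]
  rfl

end

theorem stmt6_general {n : ℕ} (p : ℝ) (f : Profile n → Set (Vertex n)) :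
    f = lpFun p ↔
      (Translation f ∧
        ∀ π : Profile n, (zeroV n ∈ f π ↔ ∀ a : Vertex n, Charp p π ≤ Charp p (pxor π a))) := by
  constructor
  · rintro rfl
    exact ⟨translation_lpFun p, zero_mem_lpFun_iff p⟩
  · rintro ⟨hT, hzero⟩
    exact hT.ext (translation_lpFun p) fun π => (hzero π).trans (zero_mem_lpFun_iff p π).symm

/-- For `p ≥ 1`, `f = ℓ_p` iff `f` satisfies (T) and for every profile `π`,
`𝟎 ∈ f(π)` iff `Char_p(π) ≤ Char_p(π ⊕ a)` for every vertex `a`. -/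
theorem stmt6 {n : ℕ} (p : ℝ) (hp : 1 ≤ p) (f : Profile n → Set (Vertex n))
    (hf : ∀ π : Profile n, (f π).Nonempty) :
    f = lpFun p ↔
      (Translation f ∧
        ∀ π : Profile n, (zeroV n ∈ f π ↔ ∀ a : Vertex n, Charp p π ≤ Charp p (pxor π a))) :=
  stmt6_general p f
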